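/- Let H be a real inner product space and μ > 0. Suppose F and K are subspaces of H, and Q_S, Q_M are quadratic forms with: (i) for all u ∈ F, Q_M(u) = Q_S(u) ≤ μ‖u‖², (ii) for all v ∈ K, Q_M(v) = μ‖v‖², and (iii) the associated bilinear form of Q_M satisfies B_M(u,v) = μ⟨u,v⟩ for all u ∈ F, v ∈ K. Then for all w ∈ F + K, Q_M(w) ≤ μ‖w‖². -/

import Mathlib

open scoped RealInnerProductSpace

theorem le_mul_norm_add_sq_of_cross_term {H : Type*} [NormedAddCommGroup H]
    [InnerProductSpace ℝ H] {Q : H → ℝ} {μ : ℝ} {u v : H}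
    (hu : Q u ≤ μ * ‖u‖ ^ 2) (hv : Q v ≤ μ * ‖v‖ ^ 2)
    (hexp : Q (u + v) = Q u + 2 * (μ * ⟪u, v⟫) + Q v) :
    Q (u + v) ≤ μ * ‖u + v‖ ^ 2 := by
  rw [hexp, norm_add_sq_real]
  linear_combination hu + hv

theorem quadratic_form_le_on_sum_general
    (H : Type*) [NormedAddCommGroup H] [InnerProductSpace ℝ H]
    (F K : Submodule ℝ H) (μ : ℝ)
    (QS QM : H → ℝ) (BM : H → H → ℝ)
    (hexp : ∀ u v : H, QM (u + v) = QM u + 2 * BM u v + QM v)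
    (hF : ∀ u ∈ F, QM u = QS u ∧ QS u ≤ μ * ‖u‖ ^ 2)
    (hK : ∀ v ∈ K, QM v = μ * ‖v‖ ^ 2)
    (hcross : ∀ u ∈ F, ∀ v ∈ K, BM u v = μ * inner ℝ u v) :
    ∀ w ∈ F ⊔ K, QM w ≤ μ * ‖w‖ ^ 2 := by
  intro w hw
  obtain ⟨u, hu, v, hv, rfl⟩ := Submodule.mem_sup.mp hw
  obtain ⟨hQ, hle⟩ := hF u hu
  refine le_mul_norm_add_sq_of_cross_term (hQ.trans_le hle) (hK v hv).le ?_
  rw [hexp, hcross u hu v hv]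

/-- Abstract core of Filonov's argument. Let `H` be a real inner product space, `μ > 0`,
`F`, `K` subspaces of `H`, and `QS`, `QM` quadratic forms with associated bilinear form
`BM` of `QM` (expressed by the expansion `QM (u+v) = QM u + 2 BM u v + QM v`). If
(i) `QM u = QS u ≤ μ‖u‖²` on `F`, (ii) `QM v = μ‖v‖²` on `K`, and (iii)
`BM u v = μ⟪u,v⟫` for `u ∈ F`, `v ∈ K`, then `QM w ≤ μ‖w‖²` for all `w ∈ F + K`. -/
theorem quadratic_form_le_on_sum
    (H : Type*) [NormedAddCommGroup H] [InnerProductSpace ℝ H]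
    (F K : Submodule ℝ H) (μ : ℝ) (hμ : 0 < μ)
    (QS QM : H → ℝ) (BM : H → H → ℝ)
    (hexp : ∀ u v : H, QM (u + v) = QM u + 2 * BM u v + QM v)
    (hF : ∀ u ∈ F, QM u = QS u ∧ QS u ≤ μ * ‖u‖ ^ 2)
    (hK : ∀ v ∈ K, QM v = μ * ‖v‖ ^ 2)
    (hcross : ∀ u ∈ F, ∀ v ∈ K, BM u v = μ * inner ℝ u v) :
    ∀ w ∈ F ⊔ K, QM w ≤ μ * ‖w‖ ^ 2 :=
  quadratic_form_le_on_sum_general H F K μ QS QM BM hexp hF hK hcross
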